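/- Asymptotic degeneracy of the modified PMCHWT symbol at zero frequency: for n ≥ 1 and wave speeds c₁, c₂ and moduli s₁, s₂ > 0, the 2×2 mode-n frequency-domain PMCHWT matrix K(Ω;n) with entries K₁₁ = -(zH'J(c₁) + zHJ'(c₂)), K₁₂ = -iΩ(HJ(c₁)/s₁ + HJ(c₂)/s₂), K₂₁ = (i/Ω)(s₁ z²H'J'(c₁) + s₂ z²H'J'(c₂)), K₂₂ = zHJ'(c₁) + zH'J(c₂), where z = Ω/c and HJ(c) = H_n⁽¹⁾(Ω/c)J_n(Ω/c) etc., satisfies as Ω → 0: K₁₁ = o(Ω), K₁₂ = O(Ω), K₂₁ = O(1/Ω), K₂₂ = o(Ω)... in particular K₁₂(Ω) → 0 and K₂₂(Ω) → 0, so the vector (0,1)ᵀ is annihilated by K(Ω;n) in the limit Ω → 0. -/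

import Mathlib

/-- Bessel function of the first kind of nonnegative integer order, via its power series. -/
noncomputable def besselJnat (n : ℕ) (z : ℂ) : ℂ :=
  ∑' k : ℕ, ((-1 : ℂ) ^ k / ((Nat.factorial k : ℂ) * (Nat.factorial (k + n) : ℂ)))
    * (z / 2) ^ (2 * k + n)

/-- Bessel function of the first kind of integer order. -/
noncomputable def besselJ (n : ℤ) (z : ℂ) : ℂ :=
  if 0 ≤ n then besselJnat n.toNat z else (-1 : ℂ) ^ ((-n).toNat) * besselJnat (-n).toNat z

/-- Bessel function of the second kind of nonnegative integer order. -/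
noncomputable def besselYnat (n : ℕ) (z : ℂ) : ℂ :=
  (2 / (Real.pi : ℂ)) * (Complex.log (z / 2) + (Real.eulerMascheroniConstant : ℂ))
      * besselJnat n z
  - (1 / (Real.pi : ℂ)) * ∑ k ∈ Finset.range n,
      ((Nat.factorial (n - 1 - k) : ℂ) / (Nat.factorial k : ℂ)) * (z / 2) ^ (2 * (k : ℤ) - n)
  - (1 / (Real.pi : ℂ)) * ∑' k : ℕ,
      ((-1 : ℂ) ^ k * (((harmonic k : ℚ) + (harmonic (n + k) : ℚ) : ℚ) : ℂ)
        / ((Nat.factorial k : ℂ) * (Nat.factorial (n + k) : ℂ))) * (z / 2) ^ (2 * k + n)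

/-- Bessel function of the second kind of integer order. -/
noncomputable def besselY (n : ℤ) (z : ℂ) : ℂ :=
  if 0 ≤ n then besselYnat n.toNat z else (-1 : ℂ) ^ ((-n).toNat) * besselYnat (-n).toNat z

/-- Hankel function of the first kind of integer order. -/
noncomputable def hankelH1 (n : ℤ) (z : ℂ) : ℂ := besselJ n z + Complex.I * besselY n z

/-!
Write `u = z / 2`. For `n ≥ 1` the defining series give, for `z ≠ 0`,
`J_n(z) = uⁿ f(u²)` and `Y_n(z) = (2/π)(log u + γ) uⁿ f(u²) - (1/π) u⁻ⁿ P(u²) - (1/π) uⁿ g(u²)`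
with `f`, `g` entire and `P` a polynomial, and the Euler operator `z ∂_z` preserves this shape.
Hence each of `H_n J_n`, `z H_n J_n'` and `z H_n' J_n` is a product of a Hankel-shaped factor
and a factor `uⁿ q(u²)`; as `z → 0` only the term where `u⁻ⁿ` meets `uⁿ` survives, leaving
`-(i/π) P(0) q(0)`. So `H_n J_n` stays bounded, which kills `K₁₂ = O(Ω)`, and the limits
`z H_n J_n' → -i/π`, `z H_n' J_n → i/π` cancel in `K₂₂`.
-/

open Complex Filter Topology
open scoped Nat Real

local notation "γ" => Real.eulerMascheroniConstant

theorem differentiable_tsum_mul_pow {a : ℕ → ℂ} {C : ℝ} (ha : ∀ k, ‖a k‖ ≤ C / k !) :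
    Differentiable ℂ fun w => ∑' k, a k * w ^ k := by
  intro w
  set R := ‖w‖ + 1
  have hdiff : DifferentiableOn ℂ (fun w => ∑' k, a k * w ^ k) (Metric.ball 0 R) := by
    refine differentiableOn_tsum_of_summable_norm
      ((Real.summable_pow_div_factorial R).mul_left C) (fun k => by fun_prop)
      Metric.isOpen_ball fun k v hv => ?_
    rw [mem_ball_zero_iff] at hv
    calc ‖a k * v ^ k‖ = ‖a k‖ * ‖v‖ ^ k := by rw [norm_mul, norm_pow]
      _ ≤ C / k ! * R ^ k :=
        mul_le_mul (ha k) (pow_le_pow_left₀ (norm_nonneg v) hv.le k) (by positivity)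
          ((norm_nonneg _).trans (ha k))
      _ = C * (R ^ k / k !) := by ring
  exact hdiff.differentiableAt (Metric.isOpen_ball.mem_nhds (by simp [R]))

theorem tsum_mul_zero_pow (a : ℕ → ℂ) : ∑' k, a k * (0 : ℂ) ^ k = a 0 := by
  rw [tsum_eq_single 0 fun k hk => by simp [hk]]
  simp

theorem tendsto_mul_log_nhds_zero : Tendsto (fun u : ℂ => u * log u) (𝓝 0) (𝓝 0) := by
  have hreal : Tendsto (fun u : ℂ => ‖u‖ * (|Real.log ‖u‖| + Real.pi)) (𝓝 0) (𝓝 0) := by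
    have hnorm : Tendsto (fun u : ℂ => ‖u‖) (𝓝 0) (𝓝 0) := by
      simpa using (continuous_norm (E := ℂ)).tendsto 0
    have hxlog : Tendsto (fun x : ℝ => |x * Real.log x|) (𝓝 0) (𝓝 0) := by
      simpa using (Real.continuous_mul_log.tendsto 0).abs
    have := (hxlog.comp hnorm).add (hnorm.mul_const Real.pi)
    simpa [mul_add, abs_mul, abs_norm] using this
  refine squeeze_zero_norm (fun u => ?_) hreal
  rw [norm_mul]
  gcongr
  calc ‖log u‖ ≤ |(log u).re| + |(log u).im| := norm_le_abs_re_add_abs_im _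
    _ ≤ |Real.log ‖u‖| + Real.pi := by rw [log_re, log_im]; gcongr; exact abs_arg_le_pi u

theorem harmonic_le_self (k : ℕ) : harmonic k ≤ k := by
  simpa [harmonic] using Finset.sum_le_card_nsmul (Finset.range k) (fun i => ((i + 1 : ℕ) : ℚ)⁻¹) 1
    fun i _ => inv_le_one_of_one_le₀ (by exact_mod_cast Nat.le_add_left 1 i)

theorem tendsto_div_ofReal_nhdsWithin_slitPlane {c : ℝ} (hc : c ≠ 0) :
    Tendsto (fun Ω : ℂ => Ω / c) (𝓝[{z : ℂ | 0 < z.im}] 0) (𝓝[slitPlane] 0) := by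
  refine tendsto_nhdsWithin_iff.mpr ⟨?_, ?_⟩
  · exact ((continuous_id.div_const _).tendsto' 0 0 (zero_div _)).mono_left nhdsWithin_le_nhds
  · filter_upwards [self_mem_nhdsWithin] with Ω (hΩ : 0 < Ω.im)
    exact mem_slitPlane_iff.mpr (Or.inr (by rw [div_ofReal_im]; exact div_ne_zero hΩ.ne' hc))

namespace Bessel

/-- The shape of the Frobenius series solutions of Bessel's equation. -/
noncomputable def frobeniusTerm (m : ℤ) (h : ℂ → ℂ) (z : ℂ) : ℂ := (z / 2) ^ m * h ((z / 2) ^ 2)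

noncomputable def eulerTransform (m : ℤ) (h : ℂ → ℂ) (w : ℂ) : ℂ := m * h w + 2 * w * deriv h w

noncomputable def logFrobeniusTerm (n : ℕ) (f P g : ℂ → ℂ) (z : ℂ) : ℂ :=
  2 / π * ((log (z / 2) + γ) * frobeniusTerm n f z)
    - 1 / π * frobeniusTerm (-n) P z - 1 / π * frobeniusTerm n g z

noncomputable def hankelFrobeniusTerm (n : ℕ) (f P g : ℂ → ℂ) (z : ℂ) : ℂ :=
  frobeniusTerm n f z + I * logFrobeniusTerm n f P g z

@[simp]
theorem eulerTransform_zero (m : ℤ) (h : ℂ → ℂ) : eulerTransform m h 0 = m * h 0 := by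
  simp [eulerTransform]

theorem differentiable_eulerTransform (m : ℤ) {h : ℂ → ℂ} (hh : Differentiable ℂ h) :
    Differentiable ℂ (eulerTransform m h) := by
  unfold eulerTransform
  fun_prop

theorem hasDerivAt_frobeniusTerm (m : ℤ) {h : ℂ → ℂ} {z : ℂ} (hz : z ≠ 0)
    (hh : DifferentiableAt ℂ h ((z / 2) ^ 2)) :
    HasDerivAt (frobeniusTerm m h) (frobeniusTerm m (eulerTransform m h) z / z) z := by
  have hz2 : z / 2 ≠ 0 := div_ne_zero hz two_ne_zero
  have hhalf : HasDerivAt (fun z : ℂ => z / 2) (1 / 2) z := (hasDerivAt_id' z).div_const 2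
  have hpow : HasDerivAt (fun z : ℂ => (z / 2) ^ m) (m * (z / 2) ^ (m - 1) * (1 / 2)) z :=
    (hasDerivAt_zpow m (z / 2) (Or.inl hz2)).comp (h₂ := fun u => u ^ m) z hhalf
  have hsq : HasDerivAt (fun z : ℂ => (z / 2) ^ 2) ((2 : ℕ) * (z / 2) ^ 1 * (1 / 2)) z :=
    hhalf.fun_pow 2
  refine (hpow.mul (hh.hasDerivAt.comp z hsq)).congr_deriv ?_
  simp only [frobeniusTerm, eulerTransform, Function.comp_apply, zpow_sub_one₀ hz2]
  field_simp
  ring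

theorem hasDerivAt_logFrobeniusTerm (n : ℕ) {f P g : ℂ → ℂ} {z : ℂ} (hz : z ∈ slitPlane)
    (hf : DifferentiableAt ℂ f ((z / 2) ^ 2)) (hP : DifferentiableAt ℂ P ((z / 2) ^ 2))
    (hg : DifferentiableAt ℂ g ((z / 2) ^ 2)) :
    HasDerivAt (logFrobeniusTerm n f P g)
      (logFrobeniusTerm n (eulerTransform n f) (eulerTransform (-n) P)
        (fun w => eulerTransform n g w - 2 * f w) z / z) z := by
  have hz0 : z ≠ 0 := slitPlane_ne_zero hz
  have hz2 : z / 2 ∈ slitPlane := by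
    rw [mem_slitPlane_iff] at hz ⊢
    simpa [div_re, div_im] using hz
  have hlog : HasDerivAt (fun z : ℂ => log (z / 2) + γ) (1 / z) z := by
    refine (((hasDerivAt_log hz2).comp z ((hasDerivAt_id' z).div_const 2)).add_const
      (γ : ℂ)).congr_deriv ?_
    field_simp
  have hFf := hasDerivAt_frobeniusTerm n hz0 hf
  have hFP := hasDerivAt_frobeniusTerm (-n) hz0 hP
  have hFg := hasDerivAt_frobeniusTerm n hz0 hg
  refine ((((hlog.fun_mul hFf).const_mul (2 / π : ℂ)).fun_sub (hFP.const_mul (1 / π : ℂ))).fun_sub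
    (hFg.const_mul (1 / π : ℂ))).congr_deriv ?_
  simp only [logFrobeniusTerm, frobeniusTerm]
  field_simp
  ring

theorem hasDerivAt_hankelFrobeniusTerm (n : ℕ) {f P g : ℂ → ℂ} {z : ℂ} (hz : z ∈ slitPlane)
    (hf : DifferentiableAt ℂ f ((z / 2) ^ 2)) (hP : DifferentiableAt ℂ P ((z / 2) ^ 2))
    (hg : DifferentiableAt ℂ g ((z / 2) ^ 2)) :
    HasDerivAt (hankelFrobeniusTerm n f P g)
      (hankelFrobeniusTerm n (eulerTransform n f) (eulerTransform (-n) P)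
        (fun w => eulerTransform n g w - 2 * f w) z / z) z := by
  refine ((hasDerivAt_frobeniusTerm n (slitPlane_ne_zero hz) hf).add
    ((hasDerivAt_logFrobeniusTerm n hz hf hP hg).const_mul I)).congr_deriv ?_
  simp only [hankelFrobeniusTerm]
  ring

theorem tendsto_hankelFrobeniusTerm_mul_frobeniusTerm {n : ℕ} (hn : n ≠ 0) {f P g q : ℂ → ℂ}
    (hf : ContinuousAt f 0) (hP : ContinuousAt P 0) (hg : ContinuousAt g 0)
    (hq : ContinuousAt q 0) :
    Tendsto (fun z => hankelFrobeniusTerm n f P g z * frobeniusTerm n q z) (𝓝[≠] 0)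
      (𝓝 (-(I / π) * (P 0 * q 0))) := by
  obtain ⟨k, rfl⟩ := Nat.exists_eq_add_one_of_ne_zero hn
  have hu : Tendsto (fun z : ℂ => z / 2) (𝓝[≠] 0) (𝓝 0) :=
    ((continuous_id.div_const 2).tendsto' 0 0 (zero_div 2)).mono_left nhdsWithin_le_nhds
  have hw : Tendsto (fun z : ℂ => (z / 2) ^ 2) (𝓝[≠] 0) (𝓝 0) := by simpa using hu.pow 2
  have hcomp {h : ℂ → ℂ} (hh : ContinuousAt h 0) :
      Tendsto (fun z => h ((z / 2) ^ 2)) (𝓝[≠] 0) (𝓝 (h 0)) := hh.tendsto.comp hw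
  have hlog : Tendsto (fun z : ℂ => z / 2 * (log (z / 2) + γ)) (𝓝[≠] 0) (𝓝 0) := by
    simpa [mul_add] using (tendsto_mul_log_nhds_zero.comp hu).add (hu.mul_const (γ : ℂ))
  have hfq := (hcomp hf).mul (hcomp hq)
  have hlim := ((hu.pow (2 * k + 2)).mul hfq).add <| Tendsto.const_mul I <|
    ((((hu.pow (2 * k + 1)).mul hlog).const_mul (2 / π : ℂ)).mul hfq).sub
      (((hcomp hP).mul (hcomp hq)).const_mul (1 / π : ℂ)) |>.sub
      (((hu.pow (2 * k + 2)).mul ((hcomp hg).mul (hcomp hq))).const_mul (1 / π : ℂ))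
  refine (hlim.congr' ?_).trans_eq (congrArg 𝓝 ?_)
  · filter_upwards [self_mem_nhdsWithin] with z (hz : z ≠ 0)
    have hz2 : z / 2 ≠ 0 := div_ne_zero hz two_ne_zero
    simp only [hankelFrobeniusTerm, logFrobeniusTerm, frobeniusTerm, zpow_neg, zpow_natCast]
    field_simp
    ring
  · rw [zero_pow (by omega : 2 * k + 2 ≠ 0), zero_pow (by omega : 2 * k + 1 ≠ 0)]
    ring

noncomputable def besselJSeries (n : ℕ) (w : ℂ) : ℂ :=
  ∑' k : ℕ, (-1 : ℂ) ^ k / ((k ! : ℂ) * ((k + n)! : ℂ)) * w ^ k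

noncomputable def besselYSeries (n : ℕ) (w : ℂ) : ℂ :=
  ∑' k : ℕ, (-1 : ℂ) ^ k * (((harmonic k + harmonic (n + k) : ℚ)) : ℂ)
    / ((k ! : ℂ) * ((n + k)! : ℂ)) * w ^ k

noncomputable def besselYPoly (n : ℕ) (w : ℂ) : ℂ :=
  ∑ k ∈ Finset.range n, ((n - 1 - k)! : ℂ) / (k ! : ℂ) * w ^ k

theorem differentiable_besselJSeries (n : ℕ) : Differentiable ℂ (besselJSeries n) := by
  refine differentiable_tsum_mul_pow (C := 1) fun k => ?_
  rw [norm_div, norm_pow, norm_neg, norm_one, one_pow, norm_mul, norm_natCast, norm_natCast]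
  gcongr
  exact le_mul_of_one_le_right (by positivity) (by exact_mod_cast (k + n).factorial_pos)

theorem differentiable_besselYSeries (n : ℕ) : Differentiable ℂ (besselYSeries n) := by
  refine differentiable_tsum_mul_pow (C := 2) fun k => ?_
  have hH : harmonic k + harmonic (n + k) ≤ 2 * (n + k)! := by
    have hk : (k : ℚ) ≤ (n + k : ℕ) := by exact_mod_cast Nat.le_add_left k n
    have hnk : ((n + k : ℕ) : ℚ) ≤ (n + k)! := by exact_mod_cast Nat.self_le_factorial _
    linarith [harmonic_le_self k, harmonic_le_self (n + k)]
  have hH0 : 0 ≤ harmonic k + harmonic (n + k) := by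
    simp only [harmonic]
    positivity
  rw [norm_div, norm_mul, norm_pow, norm_neg, norm_one, one_pow, one_mul, norm_mul,
    norm_natCast, norm_natCast, norm_ratCast, abs_of_nonneg (by exact_mod_cast hH0)]
  calc _ ≤ (2 * (n + k)! : ℝ) / (k ! * (n + k)!) := by gcongr; exact_mod_cast hH
    _ = 2 / k ! := by field_simp

theorem differentiable_besselYPoly (n : ℕ) : Differentiable ℂ (besselYPoly n) := by
  unfold besselYPoly
  fun_prop

theorem besselJSeries_zero (n : ℕ) : besselJSeries n 0 = 1 / (n ! : ℂ) := by
  simp [besselJSeries, tsum_mul_zero_pow]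

theorem besselYPoly_zero {n : ℕ} (hn : n ≠ 0) : besselYPoly n 0 = ((n - 1)! : ℂ) := by
  obtain ⟨k, rfl⟩ := Nat.exists_eq_add_one_of_ne_zero hn
  simp [besselYPoly, Finset.sum_range_succ']

theorem besselJnat_eq_frobeniusTerm (n : ℕ) (z : ℂ) :
    besselJnat n z = frobeniusTerm n (besselJSeries n) z := by
  rw [frobeniusTerm, besselJSeries, zpow_natCast, ← tsum_mul_left]
  refine tsum_congr fun k => ?_
  rw [pow_add, pow_mul]
  ring

theorem besselJ_natCast (n : ℕ) : besselJ n = frobeniusTerm n (besselJSeries n) := by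
  funext z
  simp [besselJ, besselJnat_eq_frobeniusTerm]

theorem besselY_natCast (n : ℕ) {z : ℂ} (hz : z ≠ 0) :
    besselY n z = logFrobeniusTerm n (besselJSeries n) (besselYPoly n) (besselYSeries n) z := by
  have hz2 : z / 2 ≠ 0 := div_ne_zero hz two_ne_zero
  have hpoly : ∑ k ∈ Finset.range n, ((n - 1 - k)! : ℂ) / (k ! : ℂ) * (z / 2) ^ (2 * (k : ℤ) - n)
      = frobeniusTerm (-n) (besselYPoly n) z := by
    rw [frobeniusTerm, besselYPoly, Finset.mul_sum]
    refine Finset.sum_congr rfl fun k _ => ?_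
    rw [zpow_sub₀ hz2, zpow_neg, div_eq_mul_inv, show 2 * (k : ℤ) = (2 * k : ℕ) by push_cast; ring,
      zpow_natCast, zpow_natCast, pow_mul]
    ring
  have htail : ∑' k : ℕ, ((-1 : ℂ) ^ k * (((harmonic k : ℚ) + (harmonic (n + k) : ℚ) : ℚ) : ℂ)
        / ((k ! : ℂ) * ((n + k)! : ℂ))) * (z / 2) ^ (2 * k + n)
      = frobeniusTerm n (besselYSeries n) z := by
    rw [frobeniusTerm, besselYSeries, zpow_natCast, ← tsum_mul_left]
    refine tsum_congr fun k => ?_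
    rw [pow_add, pow_mul]
    ring
  simp only [besselY, Nat.cast_nonneg, if_true, Int.toNat_natCast, besselYnat, hpoly, htail,
    besselJnat_eq_frobeniusTerm, logFrobeniusTerm]
  ring

theorem hankelH1_natCast (n : ℕ) {z : ℂ} (hz : z ≠ 0) :
    hankelH1 n z =
      hankelFrobeniusTerm n (besselJSeries n) (besselYPoly n) (besselYSeries n) z := by
  rw [hankelH1, besselJ_natCast, besselY_natCast n hz, hankelFrobeniusTerm]

theorem mul_deriv_besselJ_natCast (n : ℕ) {z : ℂ} (hz : z ≠ 0) :
    z * deriv (besselJ n) z = frobeniusTerm n (eulerTransform n (besselJSeries n)) z := by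
  rw [besselJ_natCast, (hasDerivAt_frobeniusTerm n hz (differentiable_besselJSeries n _)).deriv]
  field_simp

theorem mul_deriv_hankelH1_natCast (n : ℕ) {z : ℂ} (hz : z ∈ slitPlane) :
    z * deriv (hankelH1 n) z =
      hankelFrobeniusTerm n (eulerTransform n (besselJSeries n))
        (eulerTransform (-n) (besselYPoly n))
        (fun w => eulerTransform n (besselYSeries n) w - 2 * besselJSeries n w) z := by
  have hH : hankelH1 n =ᶠ[𝓝 z]
      hankelFrobeniusTerm n (besselJSeries n) (besselYPoly n) (besselYSeries n) :=
    (eventually_ne_nhds (slitPlane_ne_zero hz)).mono fun w hw => hankelH1_natCast n hw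
  rw [hH.deriv_eq, (hasDerivAt_hankelFrobeniusTerm n hz (differentiable_besselJSeries n _)
    (differentiable_besselYPoly n _) (differentiable_besselYSeries n _)).deriv]
  field_simp [slitPlane_ne_zero hz]

theorem besselYPoly_zero_mul_besselJSeries_zero {n : ℕ} (hn : n ≠ 0) :
    besselYPoly n 0 * besselJSeries n 0 = 1 / n := by
  have hfac : ((n - 1)! : ℂ) ≠ 0 := by exact_mod_cast (n - 1).factorial_ne_zero
  rw [besselYPoly_zero hn, besselJSeries_zero, ← Nat.mul_factorial_pred hn]
  push_cast
  field_simp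

theorem tendsto_hankelH1_mul_besselJ {n : ℕ} (hn : n ≠ 0) :
    Tendsto (fun z => hankelH1 n z * besselJ n z) (𝓝[≠] 0) (𝓝 (-I / (π * n))) := by
  have hJ := differentiable_besselJSeries n
  have h := tendsto_hankelFrobeniusTerm_mul_frobeniusTerm hn hJ.continuous.continuousAt
    (differentiable_besselYPoly n).continuous.continuousAt
    (differentiable_besselYSeries n).continuous.continuousAt hJ.continuous.continuousAt
  refine (h.congr' ?_).trans_eq (congrArg 𝓝 ?_)
  · filter_upwards [self_mem_nhdsWithin] with z hz
    rw [hankelH1_natCast n hz, besselJ_natCast]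
  · rw [besselYPoly_zero_mul_besselJSeries_zero hn]
    ring

theorem tendsto_mul_hankelH1_mul_deriv_besselJ {n : ℕ} (hn : n ≠ 0) :
    Tendsto (fun z => z * hankelH1 n z * deriv (besselJ n) z) (𝓝[≠] 0) (𝓝 (-I / π)) := by
  have hJ := differentiable_besselJSeries n
  have h := tendsto_hankelFrobeniusTerm_mul_frobeniusTerm hn hJ.continuous.continuousAt
    (differentiable_besselYPoly n).continuous.continuousAt
    (differentiable_besselYSeries n).continuous.continuousAt
    (differentiable_eulerTransform n hJ).continuous.continuousAt
  refine (h.congr' ?_).trans_eq (congrArg 𝓝 ?_)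
  · filter_upwards [self_mem_nhdsWithin] with z hz
    rw [mul_comm z, mul_assoc, mul_deriv_besselJ_natCast n hz, hankelH1_natCast n hz]
  · rw [eulerTransform_zero, mul_left_comm (besselYPoly n 0),
      besselYPoly_zero_mul_besselJSeries_zero hn, Int.cast_natCast]
    field_simp [Nat.cast_ne_zero.mpr hn]

theorem tendsto_mul_deriv_hankelH1_mul_besselJ {n : ℕ} (hn : n ≠ 0) :
    Tendsto (fun z => z * deriv (hankelH1 n) z * besselJ n z) (𝓝[slitPlane] 0) (𝓝 (I / π)) := by
  have hJ := differentiable_besselJSeries n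
  have h := tendsto_hankelFrobeniusTerm_mul_frobeniusTerm hn
    (g := fun w => eulerTransform n (besselYSeries n) w - 2 * besselJSeries n w)
    (differentiable_eulerTransform n hJ).continuous.continuousAt
    (differentiable_eulerTransform (-n) (differentiable_besselYPoly n)).continuous.continuousAt
    ((differentiable_eulerTransform n (differentiable_besselYSeries n)).continuous.sub
      (continuous_const.mul hJ.continuous)).continuousAt
    hJ.continuous.continuousAt
  refine ((h.mono_left (nhdsWithin_mono _ fun z hz => slitPlane_ne_zero hz)).congr' ?_).trans_eq
    (congrArg 𝓝 ?_)
  · filter_upwards [self_mem_nhdsWithin] with z hz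
    rw [mul_deriv_hankelH1_natCast n hz, besselJ_natCast]
  · rw [eulerTransform_zero, mul_assoc, besselYPoly_zero_mul_besselJSeries_zero hn]
    field_simp [Nat.cast_ne_zero.mpr hn]
    push_cast
    ring

end Bessel

theorem pmchwt_degeneracy_at_zero_general (n : ℤ) (hn : 1 ≤ n) (c₁ c₂ s₁ s₂ : ℝ)
    (hc₁ : 0 < c₁) (hc₂ : 0 < c₂) :
    Tendsto (fun Ω : ℂ => -(I * Ω) * (hankelH1 n (Ω / c₁) * besselJ n (Ω / c₁) / s₁
        + hankelH1 n (Ω / c₂) * besselJ n (Ω / c₂) / s₂))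
      (nhdsWithin 0 {z : ℂ | 0 < z.im}) (nhds 0) ∧
    Tendsto (fun Ω : ℂ => (Ω / c₁) * hankelH1 n (Ω / c₁) * deriv (besselJ n) (Ω / c₁)
        + (Ω / c₂) * deriv (hankelH1 n) (Ω / c₂) * besselJ n (Ω / c₂))
      (nhdsWithin 0 {z : ℂ | 0 < z.im}) (nhds 0) := by
  lift n to ℕ using by omega
  have hn0 : n ≠ 0 := by omega
  have hslit {c : ℝ} (hc : 0 < c) := tendsto_div_ofReal_nhdsWithin_slitPlane hc.ne'
  have hne {c : ℝ} (hc : 0 < c) :=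
    (hslit hc).mono_right (nhdsWithin_mono _ fun z hz => slitPlane_ne_zero hz)
  have hHJ {c : ℝ} (hc : 0 < c) := (Bessel.tendsto_hankelH1_mul_besselJ hn0).comp (hne hc)
  constructor
  · have hΩ : Tendsto (fun Ω : ℂ => -(I * Ω)) (𝓝[{z : ℂ | 0 < z.im}] 0) (𝓝 0) :=
      ((by fun_prop : Continuous fun Ω : ℂ => -(I * Ω)).tendsto' 0 0 (by simp)).mono_left
        nhdsWithin_le_nhds
    simpa using hΩ.mul (((hHJ hc₁).div_const (s₁ : ℂ)).add ((hHJ hc₂).div_const (s₂ : ℂ)))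
  · simpa [neg_div] using ((Bessel.tendsto_mul_hankelH1_mul_deriv_besselJ hn0).comp (hne hc₁)).add
      ((Bessel.tendsto_mul_deriv_hankelH1_mul_besselJ hn0).comp (hslit hc₂))

/-- Asymptotic degeneracy of the modified PMCHWT symbol at zero frequency: for `n ≥ 1` and
material constants `c₁, c₂, s₁, s₂ > 0`, the second-column entries
`K₁₂(Ω) = -iΩ(H_n⁽¹⁾(Ω/c₁)J_n(Ω/c₁)/s₁ + H_n⁽¹⁾(Ω/c₂)J_n(Ω/c₂)/s₂)` and
`K₂₂(Ω) = (Ω/c₁)H_n⁽¹⁾(Ω/c₁)J_n'(Ω/c₁) + (Ω/c₂)H_n⁽¹⁾'(Ω/c₂)J_n(Ω/c₂)` of the mode-`n`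
PMCHWT matrix both tend to `0` as `Ω → 0` in the upper half-plane; hence the vector
`(0,1)ᵀ` is annihilated by `K(Ω;n)` in the limit `Ω → 0`. -/
theorem pmchwt_degeneracy_at_zero (n : ℤ) (hn : 1 ≤ n) (c₁ c₂ s₁ s₂ : ℝ)
    (hc₁ : 0 < c₁) (hc₂ : 0 < c₂) (hs₁ : 0 < s₁) (hs₂ : 0 < s₂) :
    Tendsto (fun Ω : ℂ => -(I * Ω) * (hankelH1 n (Ω / c₁) * besselJ n (Ω / c₁) / s₁
        + hankelH1 n (Ω / c₂) * besselJ n (Ω / c₂) / s₂))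
      (nhdsWithin 0 {z : ℂ | 0 < z.im}) (nhds 0) ∧
    Tendsto (fun Ω : ℂ => (Ω / c₁) * hankelH1 n (Ω / c₁) * deriv (besselJ n) (Ω / c₁)
        + (Ω / c₂) * deriv (hankelH1 n) (Ω / c₂) * besselJ n (Ω / c₂))
      (nhdsWithin 0 {z : ℂ | 0 < z.im}) (nhds 0) :=
  pmchwt_degeneracy_at_zero_general n hn c₁ c₂ s₁ s₂ hc₁ hc₂
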